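/- arXiv:2104.12331 — 2 statements merged into one kernel-verified Lean document; each statement's English description precedes it below -/
import Mathlib

section
/- For every integer a ≥ 2, k(a,2) = 4. That is, 4 is the smallest integer k ≥ 2 such that there exists a k-covering of [a]×[2]: a 4-covering of [a]×[2] exists, and no k-covering of [a]×[2] exists for k ∈ {2,3}. -/
/-!
Every row `[a] × {y}` meets at least two rectangles, since a single `A_ℓ × B_ℓ` misses a point
of `[a]` in that row; and every `B_ℓ` contains at most `b - 1` rows. Double counting incidences
between rows and rectangles gives `2b ≤ k(b - 1)`, which for `b = 2` reads `4 ≤ k`. Conversely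
splitting `[n]` into `{1}` and `{2,…,n}` for `n = a` and `n = b` gives four rectangles that
form a `4`-covering.
-/

/-- A `k`-covering of `[a]×[b]`: subsets `A_ℓ ⊆ [a] = {1,…,a}` and `B_ℓ ⊆ [b] = {1,…,b}`,
each a nonempty proper subset, with `[a]×[b] ⊆ ⋃_ℓ (A_ℓ × B_ℓ)`. -/
def IsCovering (a b k : ℕ) (A B : Fin k → Finset ℕ) : Prop :=
  (∀ ℓ : Fin k, A ℓ ⊆ Finset.Icc 1 a ∧ (A ℓ).Nonempty ∧ A ℓ ≠ Finset.Icc 1 a) ∧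
  (∀ ℓ : Fin k, B ℓ ⊆ Finset.Icc 1 b ∧ (B ℓ).Nonempty ∧ B ℓ ≠ Finset.Icc 1 b) ∧
  (∀ x ∈ Finset.Icc 1 a, ∀ y ∈ Finset.Icc 1 b, ∃ ℓ : Fin k, x ∈ A ℓ ∧ y ∈ B ℓ)

open Finset

def splitAtOne (n : ℕ) : Fin 2 → Finset ℕ := ![{1}, Icc 2 n]

lemma splitAtOne_subset_nonempty_ne {n : ℕ} (hn : 2 ≤ n) (i : Fin 2) :
    splitAtOne n i ⊆ Icc 1 n ∧ (splitAtOne n i).Nonempty ∧ splitAtOne n i ≠ Icc 1 n := by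
  fin_cases i
  · refine ⟨by simp [splitAtOne]; omega, by simp [splitAtOne], fun h => ?_⟩
    have : 2 ∈ Icc 1 n := by simp; omega
    simp [splitAtOne, ← h] at this
  · refine ⟨Icc_subset_Icc_left (by norm_num), nonempty_Icc.mpr hn, fun h => ?_⟩
    have : 1 ∈ Icc 1 n := by simp; omega
    simp [splitAtOne, ← h] at this

lemma exists_mem_splitAtOne {n x : ℕ} (hx : x ∈ Icc 1 n) : ∃ i, x ∈ splitAtOne n i := by
  rw [mem_Icc] at hx
  rcases hx.1.eq_or_lt with rfl | h
  · exact ⟨0, by simp [splitAtOne]⟩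
  · exact ⟨1, by simp [splitAtOne]; omega⟩

theorem isCovering_four {a b : ℕ} (ha : 2 ≤ a) (hb : 2 ≤ b) :
    IsCovering a b 4 (fun ℓ => splitAtOne a ((finProdFinEquiv (m := 2) (n := 2)).symm ℓ).1)
      (fun ℓ => splitAtOne b ((finProdFinEquiv (m := 2) (n := 2)).symm ℓ).2) := by
  refine ⟨fun ℓ => splitAtOne_subset_nonempty_ne ha _, fun ℓ => splitAtOne_subset_nonempty_ne hb _, ?_⟩
  intro x hx y hy
  obtain ⟨i, hi⟩ := exists_mem_splitAtOne hx
  obtain ⟨j, hj⟩ := exists_mem_splitAtOne hy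
  exact ⟨finProdFinEquiv (i, j), by simpa using hi, by simpa using hj⟩

namespace IsCovering

variable {a b k : ℕ} {A B : Fin k → Finset ℕ}

lemma two_le_card_filter_mem (h : IsCovering a b k A B) (ha : 1 ≤ a) {y : ℕ}
    (hy : y ∈ Icc 1 b) : 2 ≤ #{ℓ | y ∈ B ℓ} := by
  obtain ⟨ℓ₁, -, hy₁⟩ := h.2.2 1 (by simp [ha]) y hy
  obtain ⟨hsub, -, hne⟩ := h.1 ℓ₁
  obtain ⟨x, hx, hx₁⟩ := not_subset.mp fun h' => hne (hsub.antisymm h')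
  obtain ⟨ℓ₂, hx₂, hy₂⟩ := h.2.2 x hx y hy
  exact one_lt_card.mpr ⟨ℓ₁, by simpa, ℓ₂, by simpa, fun e => hx₁ (e ▸ hx₂)⟩

lemma card_filter_mem_le (h : IsCovering a b k A B) (ℓ : Fin k) :
    #{y ∈ Icc 1 b | y ∈ B ℓ} ≤ b - 1 := by
  obtain ⟨hsub, -, hne⟩ := h.2.1 ℓ
  have hcard := card_lt_card (ssubset_of_subset_of_ne hsub hne)
  rw [Nat.card_Icc] at hcard
  rw [filter_mem_eq_inter, inter_eq_right.mpr hsub]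
  omega

theorem mul_two_le_mul (h : IsCovering a b k A B) (ha : 1 ≤ a) : b * 2 ≤ k * (b - 1) := by
  classical
  simpa using card_mul_le_card_mul (fun y ℓ => y ∈ B ℓ) (s := Icc 1 b) (t := univ)
    (fun y hy => h.two_le_card_filter_mem ha hy) (fun ℓ _ => h.card_filter_mem_le ℓ)

end IsCovering

/-- For every `a ≥ 2`, `k(a,2) = 4`: the least `k ≥ 2` such that a
`k`-covering of `[a]×[2]` exists is `4`. -/
theorem stmt_11 (a : ℕ) (ha : 2 ≤ a) :
    IsLeast {k : ℕ | 2 ≤ k ∧ ∃ A B : Fin k → Finset ℕ, IsCovering a 2 k A B} 4 := by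
  refine ⟨⟨by norm_num, _, _, isCovering_four ha le_rfl⟩, ?_⟩
  rintro k ⟨-, A, B, h⟩
  have hk := h.mul_two_le_mul (by omega)
  omega
end

section
/- For every integer b ≥ 2, k(2,b) = 4. That is, 4 is the smallest integer k ≥ 2 such that there exists a k-covering of [2]×[b]: a 4-covering of [2]×[b] exists, and no k-covering of [2]×[b] exists for k ∈ {2,3}. -/
/-!
Upper bound: split each side as `{1} ∪ {2,…,n}` and take the four products of the parts.
Lower bound: the blocks `A_ℓ × B_ℓ` with `x ∈ A_ℓ` cover the row `{x} × [b]`, and a single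
proper `B_ℓ` cannot, so every `x ∈ [a]` lies in at least two of the `A_ℓ`. For `a = 2` no proper
`A_ℓ` contains both `1` and `2`, so these pairs of blocks are disjoint and `k ≥ 4`.
-/

open Finset

section Split

variable {n : ℕ}

lemma singleton_one_properSubset_Icc (hn : 2 ≤ n) :
    {1} ⊆ Icc 1 n ∧ ({1} : Finset ℕ).Nonempty ∧ {1} ≠ Icc 1 n := by
  refine ⟨by simp; omega, singleton_nonempty 1, fun h => ?_⟩
  have : 2 ∈ Icc 1 n := mem_Icc.2 ⟨by omega, hn⟩
  simp [← h] at this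

lemma Icc_two_properSubset_Icc (hn : 2 ≤ n) :
    Icc 2 n ⊆ Icc 1 n ∧ (Icc 2 n).Nonempty ∧ Icc 2 n ≠ Icc 1 n := by
  refine ⟨Icc_subset_Icc_left (by norm_num), nonempty_Icc.2 hn, fun h => ?_⟩
  have : 1 ∈ Icc 1 n := mem_Icc.2 ⟨le_rfl, by omega⟩
  simp [← h] at this

lemma eq_one_or_mem_Icc_two_of_mem_Icc_one {x : ℕ} (hx : x ∈ Icc 1 n) :
    x = 1 ∨ x ∈ Icc 2 n := by
  simp only [mem_Icc] at hx ⊢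
  omega

end Split

theorem isCovering_four_s12 {a b : ℕ} (ha : 2 ≤ a) (hb : 2 ≤ b) :
    IsCovering a b 4 ![{1}, {1}, Icc 2 a, Icc 2 a] ![{1}, Icc 2 b, {1}, Icc 2 b] := by
  refine ⟨fun ℓ => ?_, fun ℓ => ?_, fun x hx y hy => ?_⟩
  · fin_cases ℓ
    exacts [singleton_one_properSubset_Icc ha, singleton_one_properSubset_Icc ha,
      Icc_two_properSubset_Icc ha, Icc_two_properSubset_Icc ha]
  · fin_cases ℓ
    exacts [singleton_one_properSubset_Icc hb, Icc_two_properSubset_Icc hb,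
      singleton_one_properSubset_Icc hb, Icc_two_properSubset_Icc hb]
  · rcases eq_one_or_mem_Icc_two_of_mem_Icc_one hx with rfl | hx <;>
      rcases eq_one_or_mem_Icc_two_of_mem_Icc_one hy with rfl | hy
    exacts [⟨0, mem_singleton_self 1, mem_singleton_self 1⟩, ⟨1, mem_singleton_self 1, hy⟩,
      ⟨2, hx, mem_singleton_self 1⟩, ⟨3, hx, hy⟩]

def blocksContaining {k : ℕ} (A : Fin k → Finset ℕ) (x : ℕ) : Finset (Fin k) :=
  {ℓ | x ∈ A ℓ}

@[simp]
lemma mem_blocksContaining {k : ℕ} {A : Fin k → Finset ℕ} {x : ℕ} {ℓ : Fin k} :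
    ℓ ∈ blocksContaining A x ↔ x ∈ A ℓ := by
  simp [blocksContaining]

namespace IsCovering

variable {a b k : ℕ} {A B : Fin k → Finset ℕ}

theorem two_le_card_blocksContaining (h : IsCovering a b k A B) (hb : 1 ≤ b) {x : ℕ}
    (hx : x ∈ Icc 1 a) : 2 ≤ #(blocksContaining A x) := by
  by_contra! hlt
  have hunique := card_le_one.1 (Nat.le_of_lt_succ hlt)
  obtain ⟨ℓ₀, hxℓ₀, -⟩ := h.2.2 x hx 1 (mem_Icc.2 ⟨le_rfl, hb⟩)
  refine (h.2.1 ℓ₀).2.2 (Subset.antisymm (h.2.1 ℓ₀).1 fun y hy => ?_)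
  obtain ⟨ℓ, hxℓ, hyℓ⟩ := h.2.2 x hx y hy
  rwa [hunique ℓ (by simpa) ℓ₀ (by simpa)] at hyℓ

theorem disjoint_blocksContaining_one_two (h : IsCovering 2 b k A B) :
    Disjoint (blocksContaining A 1) (blocksContaining A 2) := by
  refine disjoint_left.2 fun ℓ h₁ h₂ =>
    (h.1 ℓ).2.2 (Subset.antisymm (h.1 ℓ).1 fun x hx => ?_)
  rw [mem_blocksContaining] at h₁ h₂
  rcases (by simp only [mem_Icc] at hx; omega : x = 1 ∨ x = 2) with rfl | rfl
  exacts [h₁, h₂]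

theorem four_le (h : IsCovering 2 b k A B) (hb : 1 ≤ b) : 4 ≤ k :=
  calc 4 ≤ #(blocksContaining A 1) + #(blocksContaining A 2) :=
        add_le_add (h.two_le_card_blocksContaining hb (by simp))
          (h.two_le_card_blocksContaining hb (by simp))
    _ = #(blocksContaining A 1 ∪ blocksContaining A 2) :=
        (card_union_of_disjoint h.disjoint_blocksContaining_one_two).symm
    _ ≤ k := (card_le_univ _).trans_eq (Fintype.card_fin k)

end IsCovering

/-- For every `b ≥ 2`, `k(2,b) = 4`: the least `k ≥ 2` such that a
`k`-covering of `[2]×[b]` exists is `4`. -/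
theorem stmt_12 (b : ℕ) (hb : 2 ≤ b) :
    IsLeast {k : ℕ | 2 ≤ k ∧ ∃ A B : Fin k → Finset ℕ, IsCovering 2 b k A B} 4 :=
  ⟨⟨by norm_num, _, _, isCovering_four_s12 le_rfl hb⟩,
    fun _ ⟨_, _, _, h⟩ => h.four_le (by omega)⟩
end
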